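/- Electrostatic potential of a point move, part (d) of Lemma 2.26: let k > 0 and Λ = [−k, k], and let p be such that [−3k, 3k] ⊆ Λ_p. For every integer M ≥ 1, all points γ_1, …, γ_M, η_1, …, η_M ∈ Λ, and every x ∈ ℝ ∖ Λ_p, one has |Ψ(x)| ≤ W₁ / dist(x, Λ) and |Ψ′(x)| ≤ 8 · W₁ / dist(x, Λ)², where dist(x, Λ) = |x| − k > 0 and Ψ′ denotes the derivative of Ψ. -/

import Mathlib

open MeasureTheory Real Filter Topology
open scoped ENNReal Classical BigOperators

noncomputable section

/-- `Lam m` is the interval `Λ_m = [-m/2, m/2]`. -/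
def Lam (m : ℝ) : Set ℝ := Set.Icc (-(m / 2)) (m / 2)

/-- The `n`-periodic logarithmic potential `g_n`. -/
def gper (n : ℕ) (x : ℝ) : ℝ :=
  if Real.sin (Real.pi * x / n) ≠ 0 then -Real.log |2 * Real.sin (Real.pi * x / n)| else 0

/-- `Ψ(s) = Σ_i (log|s - γ_i| - log|s - η_i|)`. -/
def Psi {M : ℕ} (γ η : Fin M → ℝ) (s : ℝ) : ℝ :=
  ∑ i, (Real.log |s - γ i| - Real.log |s - η i|)

/-- `Ψ_n(s) = Σ_i (g_n(s - η_i) - g_n(s - γ_i))`. -/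
def Psin (n : ℕ) {M : ℕ} (γ η : Fin M → ℝ) (s : ℝ) : ℝ :=
  ∑ i, (gper n (s - η i) - gper n (s - γ i))

/-- `W₁`, the minimal matching cost between the tuples `γ` and `η`. -/
def W1 {M : ℕ} (γ η : Fin M → ℝ) : ℝ :=
  ⨅ σ : Equiv.Perm (Fin M), ∑ i, |γ i - η (σ i)|

/-!
Both `Ψ(x)` and `Ψ'(x)` are sums `∑ i, (f (γ i) - f (η i))`, for `f = log |x - ·|` and
`f = (x - ·)⁻¹`, and these are Lipschitz on `Λ` with constants `1 / d` and `1 / d²`, where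
`d = |x| - k ≤ |x - c|` for `c ∈ Λ`. Such a sum does not change when the `η i` are re-paired
along a permutation, and re-pairing along an optimal matching bounds it by the Lipschitz
constant times `W₁`.
-/

section Matching

variable {M : ℕ} (γ η : Fin M → ℝ)

theorem exists_perm_W1_eq : ∃ σ : Equiv.Perm (Fin M), W1 γ η = ∑ i, |γ i - η (σ i)| := by
  obtain ⟨σ, hσ⟩ := Finite.exists_min fun σ : Equiv.Perm (Fin M) => ∑ i, |γ i - η (σ i)|
  exact ⟨σ, le_antisymm (ciInf_le (Set.finite_range _).bddBelow σ) (le_ciInf hσ)⟩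

theorem W1_nonneg : 0 ≤ W1 γ η := by
  obtain ⟨σ, hσ⟩ := exists_perm_W1_eq γ η
  exact hσ ▸ Finset.sum_nonneg fun i _ => abs_nonneg _

variable {γ η}

theorem abs_sum_sub_le_mul_W1 {S : Set ℝ} (f : ℝ → ℝ) {L : ℝ}
    (hf : ∀ a ∈ S, ∀ b ∈ S, |f a - f b| ≤ L * |a - b|)
    (hγ : ∀ i, γ i ∈ S) (hη : ∀ i, η i ∈ S) :
    |∑ i, (f (γ i) - f (η i))| ≤ L * W1 γ η := by
  obtain ⟨σ, hσ⟩ := exists_perm_W1_eq γ η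
  have hmatch : ∑ i, (f (γ i) - f (η i)) = ∑ i, (f (γ i) - f (η (σ i))) := by
    simp only [Finset.sum_sub_distrib, Equiv.sum_comp σ fun i => f (η i)]
  rw [hmatch, hσ, Finset.mul_sum]
  exact (Finset.abs_sum_le_sum_abs _ _).trans
    (Finset.sum_le_sum fun i _ => hf _ (hγ i) _ (hη (σ i)))

end Matching

theorem abs_log_sub_log_le {a b d : ℝ} (hd : 0 < d) (ha : d ≤ a) (hb : d ≤ b) :
    |Real.log a - Real.log b| ≤ |a - b| / d := by
  wlog hba : b ≤ a generalizing a b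
  · rw [abs_sub_comm, abs_sub_comm a]
    exact this hb ha (le_of_not_ge hba)
  have ha0 : 0 < a := hd.trans_le ha
  have hb0 : 0 < b := hd.trans_le hb
  rw [abs_of_nonneg (sub_nonneg.2 (Real.log_le_log hb0 hba)), abs_of_nonneg (sub_nonneg.2 hba),
    ← Real.log_div ha0.ne' hb0.ne']
  calc Real.log (a / b) ≤ a / b - 1 := Real.log_le_sub_one_of_pos (div_pos ha0 hb0)
    _ = (a - b) / b := by field_simp
    _ ≤ (a - b) / d := by gcongr

theorem norm_inv_sub_inv_le {𝕜 : Type*} [NormedField 𝕜] {a b : 𝕜} {d : ℝ} (hd : 0 < d)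
    (ha : d ≤ ‖a‖) (hb : d ≤ ‖b‖) : ‖a⁻¹ - b⁻¹‖ ≤ ‖a - b‖ / d ^ 2 := by
  have ha0 : a ≠ 0 := norm_pos_iff.1 (hd.trans_le ha)
  have hb0 : b ≠ 0 := norm_pos_iff.1 (hd.trans_le hb)
  rw [inv_sub_inv ha0 hb0, norm_div, norm_mul, norm_sub_rev, sq]
  gcongr

theorem abs_sub_eq_abs_sub_sub_sub (x a b : ℝ) : |a - b| = |(x - a) - (x - b)| := by
  rw [sub_sub_sub_cancel_left, abs_sub_comm]

section DistanceBounds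

variable {x a b d : ℝ}

theorem abs_log_abs_sub_sub_log_abs_sub_le (hd : 0 < d) (ha : d ≤ |x - a|) (hb : d ≤ |x - b|) :
    |Real.log (|x - a|) - Real.log (|x - b|)| ≤ d⁻¹ * |a - b| := by
  rw [inv_mul_eq_div, abs_sub_eq_abs_sub_sub_sub x a b]
  exact (abs_log_sub_log_le hd ha hb).trans
    (div_le_div_of_nonneg_right (abs_abs_sub_abs_le_abs_sub _ _) hd.le)

theorem abs_inv_sub_sub_inv_sub_le (hd : 0 < d) (ha : d ≤ |x - a|) (hb : d ≤ |x - b|) :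
    |(x - a)⁻¹ - (x - b)⁻¹| ≤ (d ^ 2)⁻¹ * |a - b| := by
  rw [inv_mul_eq_div, abs_sub_eq_abs_sub_sub_sub x a b]
  exact norm_inv_sub_inv_le (a := x - a) (b := x - b) hd ha hb

end DistanceBounds

theorem hasDerivAt_Psi {M : ℕ} {γ η : Fin M → ℝ} {x : ℝ} (hγ : ∀ i, x ≠ γ i)
    (hη : ∀ i, x ≠ η i) :
    HasDerivAt (Psi γ η) (∑ i, ((x - γ i)⁻¹ - (x - η i)⁻¹)) x := by
  have hlog : ∀ c, x ≠ c → HasDerivAt (fun s => Real.log |s - c|) (x - c)⁻¹ x := by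
    intro c hc
    simpa only [Real.log_abs, one_div, id] using
      ((hasDerivAt_id x).sub_const c).log (sub_ne_zero.2 hc)
  unfold Psi
  exact HasDerivAt.fun_sum fun i _ => (hlog _ (hγ i)).sub (hlog _ (hη i))

theorem sub_le_abs_sub_of_mem_Icc {k c : ℝ} (x : ℝ) (hc : c ∈ Set.Icc (-k) k) :
    |x| - k ≤ |x - c| := by
  have := abs_sub_abs_le_abs_sub x c
  have := abs_le.2 hc
  linarith

theorem lt_abs_of_Icc_subset_Lam {a p x : ℝ} (hp : Set.Icc (-a) a ⊆ Lam p) (hx : x ∉ Lam p) :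
    a < |x| := by
  contrapose! hx
  exact hp (abs_le.1 hx)

theorem move_potential_d_general
    (k : ℝ) (hk : 0 < k) (p : ℝ)
    (hp : Set.Icc (-(3 * k)) (3 * k) ⊆ Lam p)
    (M : ℕ) (γ η : Fin M → ℝ)
    (hγ : ∀ i, γ i ∈ Set.Icc (-k) k) (hη : ∀ i, η i ∈ Set.Icc (-k) k)
    (x : ℝ) (hx : x ∈ Set.univ \ Lam p) :
    |Psi γ η x| ≤ W1 γ η / (|x| - k) ∧
      |deriv (Psi γ η) x| ≤ 8 * W1 γ η / (|x| - k) ^ 2 := by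
  set d := |x| - k
  have hd : 0 < d := by linarith [lt_abs_of_Icc_subset_Lam hp hx.2]
  have hdist : ∀ c ∈ Set.Icc (-k) k, d ≤ |x - c| := fun c hc => sub_le_abs_sub_of_mem_Icc x hc
  have hne : ∀ c ∈ Set.Icc (-k) k, x ≠ c := fun c hc h => by
    linarith [hdist c hc, show |x - c| = 0 by simp [h]]
  constructor
  · simpa only [Psi, div_eq_inv_mul] using abs_sum_sub_le_mul_W1 (fun c => Real.log |x - c|)
      (fun a ha b hb => abs_log_abs_sub_sub_log_abs_sub_le hd (hdist a ha) (hdist b hb)) hγ hη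
  · rw [(hasDerivAt_Psi (fun i => hne _ (hγ i)) fun i => hne _ (hη i)).deriv]
    calc _ ≤ (d ^ 2)⁻¹ * W1 γ η := abs_sum_sub_le_mul_W1 (fun c => (x - c)⁻¹)
          (fun a ha b hb => abs_inv_sub_sub_inv_sub_le hd (hdist a ha) (hdist b hb)) hγ hη
      _ ≤ 8 * W1 γ η / d ^ 2 := by
        rw [inv_mul_eq_div]
        gcongr
        linarith [W1_nonneg γ η]

/-- **Electrostatic potential of a point move, part (d) of Lemma 2.26**. -/
theorem move_potential_d
    (k : ℝ) (hk : 0 < k) (p : ℝ)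
    (hp : Set.Icc (-(3 * k)) (3 * k) ⊆ Lam p)
    (M : ℕ) (hM : 1 ≤ M) (γ η : Fin M → ℝ)
    (hγ : ∀ i, γ i ∈ Set.Icc (-k) k) (hη : ∀ i, η i ∈ Set.Icc (-k) k)
    (x : ℝ) (hx : x ∈ Set.univ \ Lam p) :
    |Psi γ η x| ≤ W1 γ η / (|x| - k) ∧
      |deriv (Psi γ η) x| ≤ 8 * W1 γ η / (|x| - k) ^ 2 :=
  move_potential_d_general k hk p hp M γ η hγ hη x hx
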